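/- The state space [0,1] is partitioned into n intervals I_1 = [0, 1/n] and I_j = ((j−1)/n, j/n] for j = 2, …, n, each of length 1/n. Let {μ_s}_{s∈[0,1]} be Borel probability measures on [0,1] with t ↦ μ_t(I_j) measurable for each j and ∑_{j=1}^n |μ_s(I_j) − μ_t(I_j)| ≤ L|s − t|^α for all s, t ∈ [0,1] (L > 0, α > 0). Fix a partition interval I' and set P^{agg}(I_j | I') = n·∫_{I'} μ_t(I_j) dt. Let H > 0, let V : [0,1] → ℝ be measurable with 0 ≤ V(s) ≤ H for all s, let ε ≥ 0, and let v_1, …, v_n ∈ [0, H] satisfy |V(s) − v_j| ≤ ε for all s ∈ I_j and all j. Then for every x ∈ I', |∫_{[0,1]} V dμ_x − ∑_{j=1}^n v_j·P^{agg}(I_j | I')| ≤ ε + H·L·n^{−α}. -/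

import Mathlib

open MeasureTheory Set

/-- The partition of the state space `[0,1]` into `n` intervals:
`I 1 = [0, 1/n]` and `I j = ((j-1)/n, j/n]` for `j = 2, …, n`. -/
def part (n j : ℕ) : Set ℝ :=
  if j = 1 then Icc 0 (1 / n) else Ioc (((j : ℝ) - 1) / n) ((j : ℝ) / n)

lemma part_meas (n j : ℕ) : MeasurableSet (part n j) := by
  unfold part; split_ifs
  · exact measurableSet_Icc
  · exact measurableSet_Ioc

lemma part_subset (n j : ℕ) (hj : 1 ≤ j) :
    part n j ⊆ Icc (((j:ℝ) - 1) / n) ((j:ℝ) / n) := by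
  unfold part; split_ifs with h
  · subst h; norm_num
  · exact Ioc_subset_Icc_self

lemma part_sub_unit (n : ℕ) (hn : 1 ≤ n) {j : ℕ} (hj : j ∈ Finset.Icc 1 n) :
    part n j ⊆ Icc (0:ℝ) 1 := by
  obtain ⟨h1, h2⟩ := Finset.mem_Icc.mp hj
  have hn0 : (0:ℝ) < n := by exact_mod_cast hn
  refine (part_subset n j h1).trans (Icc_subset_Icc ?_ ?_)
  · apply div_nonneg _ hn0.le
    have : (1:ℝ) ≤ j := by exact_mod_cast h1
    linarith
  · rw [div_le_one hn0]; exact_mod_cast h2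

lemma part_disjoint (n : ℕ) (hn : 1 ≤ n) {j k : ℕ} (hj : 1 ≤ j) (hjk : j < k) :
    Disjoint (part n j) (part n k) := by
  have hn0 : (0:ℝ) < n := by exact_mod_cast hn
  have hk : k ≠ 1 := by omega
  rw [Set.disjoint_left]
  intro y hyj hyk
  have h1 : y ≤ (j:ℝ)/n := by
    unfold part at hyj
    split_ifs at hyj with h
    · subst h; exact_mod_cast hyj.2
    · exact hyj.2
  have h2 : ((k:ℝ)-1)/n < y := by
    unfold part at hyk; rw [if_neg hk] at hyk; exact hyk.1
  have hc : (j:ℝ) ≤ (k:ℝ) - 1 := by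
    have : (j:ℝ) + 1 ≤ k := by exact_mod_cast hjk
    linarith
  have hle : (j:ℝ)/n ≤ ((k:ℝ)-1)/n := by
    gcongr
  linarith

lemma part_vol (n : ℕ) (hn : 1 ≤ n) {j : ℕ} (hj : 1 ≤ j) :
    volume (part n j) = ENNReal.ofReal (1 / (n:ℝ)) := by
  unfold part; split_ifs with h
  · rw [Real.volume_Icc]; norm_num
  · rw [Real.volume_Ioc]; congr 1; field_simp; ring

lemma part_cover (n : ℕ) (hn : 1 ≤ n) : Icc (0:ℝ) 1 = ⋃ j ∈ Finset.Icc 1 n, part n j := by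
  have hn0 : (0:ℝ) < n := by exact_mod_cast hn
  ext y
  simp only [Set.mem_iUnion, exists_prop]
  constructor
  · rintro ⟨hy0, hy1⟩
    by_cases h : y ≤ 1/(n:ℝ)
    · exact ⟨1, Finset.mem_Icc.mpr ⟨le_rfl, hn⟩, by rw [part, if_pos rfl]; exact ⟨hy0, by simpa using h⟩⟩
    · push_neg at h
      have hyn : (1:ℝ) < y * n := by
        rw [div_lt_iff₀ hn0] at h; linarith [h]
      refine ⟨⌈y * n⌉₊, Finset.mem_Icc.mpr ⟨?_, ?_⟩, ?_⟩
      · have : 1 < ⌈y * n⌉₊ := by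
          rw [Nat.lt_ceil]; exact_mod_cast hyn
        omega
      · rw [Nat.ceil_le]
        calc y * n ≤ 1 * n := by nlinarith
        _ = (n:ℝ) := by ring
      · have h2 : 1 < ⌈y * n⌉₊ := by rw [Nat.lt_ceil]; exact_mod_cast hyn
        unfold part
        rw [if_neg (by omega)]
        constructor
        · rw [div_lt_iff₀ hn0]
          have := Nat.ceil_lt_add_one (by positivity : (0:ℝ) ≤ y * n)
          linarith
        · rw [le_div_iff₀ hn0]
          exact Nat.le_ceil _
  · rintro ⟨j, hj, hyj⟩
    exact part_sub_unit n hn hj hyj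

/-- Aggregated transition probability `P^{agg}(I_j | I_i) = n·∫_{I_i} μ_t(I_j) dt`. -/
noncomputable def Pagg (n : ℕ) (μ : ℝ → Measure ℝ) (i j : ℕ) : ℝ :=
  n * ∫ t in part n i, (μ t (part n j)).toReal

/-- Bound on the `l₂` term of the discretization error: if a measurable
`V : [0,1] → [0,H]` is approximated within `ε` on each interval `I_j` by `v_j ∈ [0,H]`,
then `|∫_{[0,1]} V dμ_x − ∑_j v_j·P^{agg}(I_j | I_i)| ≤ ε + H·L·n^(-α)` for `x ∈ I_i`. -/
theorem value_transition_discretization_error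
    (n : ℕ) (hn : 1 ≤ n) (L α : ℝ) (hL : 0 < L) (hα : 0 < α)
    (μ : ℝ → Measure ℝ) [∀ s, IsProbabilityMeasure (μ s)]
    (hsupp : ∀ s, μ s (Icc 0 1) = 1)
    (hmeas : ∀ j ∈ Finset.Icc 1 n, Measurable fun t => (μ t (part n j)).toReal)
    (hHolder : ∀ s ∈ Icc (0:ℝ) 1, ∀ t ∈ Icc (0:ℝ) 1,
      ∑ j ∈ Finset.Icc 1 n, |(μ s (part n j)).toReal - (μ t (part n j)).toReal|
        ≤ L * |s - t| ^ α)
    (i : ℕ) (hi : i ∈ Finset.Icc 1 n)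
    (H : ℝ) (hH : 0 < H)
    (V : ℝ → ℝ) (hVmeas : Measurable V) (hVrange : ∀ s, V s ∈ Icc 0 H)
    (ε : ℝ) (hε : 0 ≤ ε)
    (v : ℕ → ℝ) (hv : ∀ j ∈ Finset.Icc 1 n, v j ∈ Icc 0 H)
    (happrox : ∀ j ∈ Finset.Icc 1 n, ∀ s ∈ part n j, |V s - v j| ≤ ε)
    (x : ℝ) (hx : x ∈ part n i) :
    |(∫ s in Icc (0:ℝ) 1, V s ∂(μ x)) - ∑ j ∈ Finset.Icc 1 n, v j * Pagg n μ i j|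
      ≤ ε + H * L * (n : ℝ) ^ (-α) := by
  obtain ⟨hi1, hi2⟩ := Finset.mem_Icc.mp hi
  have hn0 : (0:ℝ) < n := by exact_mod_cast hn
  set J := Finset.Icc 1 n with hJ
  have hpm : ∀ j ∈ J, MeasurableSet (part n j) := fun j _ => part_meas n j
  have hpd : Set.Pairwise (↑J) (Function.onFun Disjoint (part n)) := by
    intro j hj k hk hne
    rcases lt_or_gt_of_ne hne with h | h
    · exact part_disjoint n hn (Finset.mem_Icc.mp hj).1 h
    · exact (part_disjoint n hn (Finset.mem_Icc.mp hk).1 h).symm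
  have hVint : Integrable V (μ x) := by
    apply (integrable_const H).mono' hVmeas.aestronglyMeasurable
    filter_upwards with s
    rw [Real.norm_eq_abs, abs_le]
    exact ⟨by linarith [(hVrange s).1], (hVrange s).2⟩
  have hsplit : ∫ s in Icc (0:ℝ) 1, V s ∂(μ x) = ∑ j ∈ J, ∫ s in part n j, V s ∂(μ x) := by
    rw [part_cover n hn, integral_biUnion_finset J hpm hpd (fun j _ => hVint.integrableOn)]
  have hμfin : ∀ j, μ x (part n j) ≠ ⊤ := fun j => measure_ne_top _ _
  have hsum1 : ∑ j ∈ J, (μ x (part n j)).toReal = 1 := by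
    rw [← ENNReal.toReal_sum (fun j _ => hμfin j), ← measure_biUnion_finset hpd hpm,
      ← part_cover n hn, hsupp x, ENNReal.toReal_one]
  -- term A
  have hA : |∑ j ∈ J, ((∫ s in part n j, V s ∂(μ x)) - v j * (μ x (part n j)).toReal)| ≤ ε := by
    calc |∑ j ∈ J, ((∫ s in part n j, V s ∂(μ x)) - v j * (μ x (part n j)).toReal)|
        ≤ ∑ j ∈ J, |(∫ s in part n j, V s ∂(μ x)) - v j * (μ x (part n j)).toReal| :=
          Finset.abs_sum_le_sum_abs _ _
      _ ≤ ∑ j ∈ J, ε * (μ x (part n j)).toReal := by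
          apply Finset.sum_le_sum
          intro j hj
          have heq : (∫ s in part n j, V s ∂(μ x)) - v j * (μ x (part n j)).toReal
              = ∫ s in part n j, (V s - v j) ∂(μ x) := by
            rw [integral_sub hVint.integrableOn (integrableOn_const (measure_ne_top _ _)),
              setIntegral_const, measureReal_def, smul_eq_mul]
            ring
          rw [heq, ← Real.norm_eq_abs]
          exact norm_setIntegral_le_of_norm_le_const (measure_lt_top _ _)
            (fun s hs => by rw [Real.norm_eq_abs]; exact happrox j hj s hs)
      _ = ε * ∑ j ∈ J, (μ x (part n j)).toReal := by rw [← Finset.mul_sum]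
      _ = ε := by rw [hsum1, mul_one]
  -- integrability facts on part n i
  have hvolfin : volume (part n i) ≠ ⊤ := by
    rw [part_vol n hn hi1]; exact ENNReal.ofReal_ne_top
  have hvol : (volume (part n i)).toReal = 1 / n := by
    rw [part_vol n hn hi1, ENNReal.toReal_ofReal (by positivity)]
  have hgint : ∀ j ∈ J, IntegrableOn (fun t => (μ t (part n j)).toReal) (part n i) volume := by
    intro j hj
    apply Measure.integrableOn_of_bounded hvolfin (hmeas j hj).aestronglyMeasurable (M := 1)
    filter_upwards with t
    rw [Real.norm_eq_abs, abs_of_nonneg ENNReal.toReal_nonneg]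
    exact ENNReal.toReal_le_of_le_ofReal zero_le_one (by simpa using prob_le_one)
  have hD : ∀ j ∈ J, (μ x (part n j)).toReal - Pagg n μ i j
      = n * ∫ t in part n i, ((μ x (part n j)).toReal - (μ t (part n j)).toReal) := by
    intro j hj
    rw [integral_sub (integrableOn_const (C := (μ x (part n j)).toReal) hvolfin) (hgint j hj),
      setIntegral_const, measureReal_def, hvol, smul_eq_mul, Pagg]
    field_simp
  -- term B pointwise bound
  have hxI : x ∈ Icc (0:ℝ) 1 := part_sub_unit n hn hi hx
  have hlen : (i:ℝ)/n - ((i:ℝ)-1)/n = 1/n := by field_simp; ring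
  have hDle : ∑ j ∈ J, |(μ x (part n j)).toReal - Pagg n μ i j| ≤ L * (n:ℝ)^(-α) := by
    have hC : ∀ t ∈ part n i,
        ∑ j ∈ J, |(μ x (part n j)).toReal - (μ t (part n j)).toReal| ≤ L * (1/(n:ℝ))^α := by
      intro t ht
      have hxt : |x - t| ≤ 1/(n:ℝ) := by
        obtain ⟨hx1, hx2⟩ := part_subset n i hi1 hx
        obtain ⟨ht1, ht2⟩ := part_subset n i hi1 ht
        rw [abs_sub_le_iff]
        constructor <;> linarith
      calc ∑ j ∈ J, |(μ x (part n j)).toReal - (μ t (part n j)).toReal|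
          ≤ L * |x - t| ^ α := hHolder x hxI t (part_sub_unit n hn hi ht)
        _ ≤ L * (1/(n:ℝ))^α := by
            apply mul_le_mul_of_nonneg_left _ hL.le
            exact Real.rpow_le_rpow (abs_nonneg _) hxt hα.le
    calc ∑ j ∈ J, |(μ x (part n j)).toReal - Pagg n μ i j|
        ≤ ∑ j ∈ J, (n:ℝ) * ∫ t in part n i,
            |(μ x (part n j)).toReal - (μ t (part n j)).toReal| := by
          apply Finset.sum_le_sum
          intro j hj
          rw [hD j hj, abs_mul, abs_of_nonneg hn0.le]
          apply mul_le_mul_of_nonneg_left _ hn0.le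
          rw [← Real.norm_eq_abs]
          refine (norm_integral_le_integral_norm _).trans (le_of_eq ?_)
          simp [Real.norm_eq_abs]
      _ = (n:ℝ) * ∫ t in part n i,
            ∑ j ∈ J, |(μ x (part n j)).toReal - (μ t (part n j)).toReal| := by
          rw [← Finset.mul_sum]
          congr 1
          exact (integral_finset_sum J
            (fun j hj => ((integrableOn_const hvolfin).sub (hgint j hj)).abs)).symm
      _ ≤ (n:ℝ) * ((L * (1/(n:ℝ))^α) * (volume (part n i)).toReal) := by
          apply mul_le_mul_of_nonneg_left _ hn0.le
          calc (∫ t in part n i, ∑ j ∈ J, |(μ x (part n j)).toReal - (μ t (part n j)).toReal|)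
              ≤ ‖∫ t in part n i, ∑ j ∈ J, |(μ x (part n j)).toReal - (μ t (part n j)).toReal|‖ :=
                le_abs_self _
            _ ≤ (L * (1/(n:ℝ))^α) * (volume (part n i)).toReal := by
                apply norm_setIntegral_le_of_norm_le_const hvolfin.lt_top
                intro t ht
                rw [Real.norm_eq_abs, abs_of_nonneg (Finset.sum_nonneg (fun j _ => abs_nonneg _))]
                exact hC t ht
      _ = L * (n:ℝ)^(-α) := by
          rw [hvol, one_div, Real.inv_rpow hn0.le, ← Real.rpow_neg hn0.le]
          field_simp
  have hB : |∑ j ∈ J, v j * ((μ x (part n j)).toReal - Pagg n μ i j)| ≤ H * (L * (n:ℝ)^(-α)) := by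
    calc |∑ j ∈ J, v j * ((μ x (part n j)).toReal - Pagg n μ i j)|
        ≤ ∑ j ∈ J, |v j * ((μ x (part n j)).toReal - Pagg n μ i j)| :=
          Finset.abs_sum_le_sum_abs _ _
      _ ≤ ∑ j ∈ J, H * |(μ x (part n j)).toReal - Pagg n μ i j| := by
          apply Finset.sum_le_sum
          intro j hj
          rw [abs_mul]
          apply mul_le_mul_of_nonneg_right _ (abs_nonneg _)
          rw [abs_of_nonneg (hv j hj).1]
          exact (hv j hj).2
      _ = H * ∑ j ∈ J, |(μ x (part n j)).toReal - Pagg n μ i j| := by rw [← Finset.mul_sum]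
      _ ≤ H * (L * (n:ℝ)^(-α)) := mul_le_mul_of_nonneg_left hDle hH.le
  have hfinal : (∫ s in Icc (0:ℝ) 1, V s ∂(μ x)) - ∑ j ∈ J, v j * Pagg n μ i j
      = (∑ j ∈ J, ((∫ s in part n j, V s ∂(μ x)) - v j * (μ x (part n j)).toReal))
        + ∑ j ∈ J, v j * ((μ x (part n j)).toReal - Pagg n μ i j) := by
    rw [hsplit, ← Finset.sum_add_distrib, ← Finset.sum_sub_distrib]
    exact Finset.sum_congr rfl (fun j _ => by ring)
  rw [hfinal]
  calc |_ + _| ≤ _ := abs_add_le _ _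
    _ ≤ ε + H * (L * (n:ℝ)^(-α)) := add_le_add hA hB
    _ = ε + H * L * (n:ℝ)^(-α) := by ring
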